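/- Let $n \equiv 0 \pmod 4$, $n \ge 8$. Let $G$ be the graph obtained from two disjoint copies of $CP_{n/2}$ joined by a single edge $uv$, where $u$ and $v$ each have degree $n/2 - 2$ within their respective copies. Then the spectral radius of $G$ satisfies $\rho(G) < \frac{n}{2} + \frac{4}{n} - 2$. -/

import Mathlib

open SimpleGraph Finset

/-- `F` is contained in `G` as a subgraph (an injective adjacency-preserving map). -/
def containsCopy {α β : Type*} (F : SimpleGraph α) (G : SimpleGraph β) : Prop :=
  ∃ f : α ↪ β, ∀ a b, F.Adj a b → G.Adj (f a) (f b)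

/-- For even `d` this is the cocktail party graph `CP_d` (complete graph minus the
perfect matching pairing `2j, 2j+1`); for odd `d` it is the odd cocktail party graph
`L_d = CP_{d-1} ∨ K_1`. -/
def cocktail (d : ℕ) : SimpleGraph (Fin d) :=
  SimpleGraph.fromRel (fun i j => (i : ℕ) / 2 ≠ (j : ℕ) / 2)

/-- `S` is a dissociation set of `G`: every vertex of `S` has at most one neighbor in `S`. -/
def IsDissocSet {V : Type*} (G : SimpleGraph V) (S : Finset V) : Prop :=
  ∀ v ∈ S, ({u | u ∈ S ∧ G.Adj v u}).ncard ≤ 1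

/-- The dissociation number of `G`. -/
noncomputable def dissocNum {V : Type*} [Fintype V] (G : SimpleGraph V) : ℕ :=
  sSup {k | ∃ S : Finset V, IsDissocSet G S ∧ S.card = k}

open scoped Classical in
/-- The largest adjacency eigenvalue (spectral radius) of a graph. -/
noncomputable def specRad {V : Type*} [Fintype V] (G : SimpleGraph V) : ℝ :=
  sSup {x : ℝ | ∃ f : V → ℝ, f ≠ 0 ∧ (G.adjMatrix ℝ).mulVec f = x • f}

/-- Two disjoint copies of the cocktail party graph `CP_m` joined by a single edge
between vertex `0` of the left copy and vertex `0` of the right copy (every vertex of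
`CP_m` has degree `m - 2` within its copy). -/
def twoCP (m : ℕ) : SimpleGraph (Fin m ⊕ Fin m) :=
  SimpleGraph.fromRel (fun x y =>
    match x, y with
    | Sum.inl a, Sum.inl b => (a : ℕ) / 2 ≠ (b : ℕ) / 2
    | Sum.inr a, Sum.inr b => (a : ℕ) / 2 ≠ (b : ℕ) / 2
    | Sum.inl a, Sum.inr b => (a : ℕ) = 0 ∧ (b : ℕ) = 0
    | Sum.inr _, Sum.inl _ => False)

/-!
A Collatz–Wielandt bound: if a nonnegative matrix `A` and a positive vector `w` satisfy
`A w ≤ B w`, then every real eigenvalue of `A` has absolute value at most `B`.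

In `twoCP m`, the adjacency matrix maps a vector that is constant on the three classes
`{u', v'}`, `{u, v}` and the rest of the equitable partition to another such vector, through
the quotient matrix. Put `B = m - 2 + ε` with `ε = 4 / (2m + 1) < 2 / m`. The class weights
`a = (m - 2) / B`, `b = (m - 2) / (B - 1)`, `c = 1` make the first two rows of `A w ≤ B w`
equalities, and the third row reduces to `ε (m - 2) + ε² ≥ 1`, i.e. `(2m - 1)(2m - 7) ≥ 0`.
-/

open Matrix

theorem Matrix.abs_le_of_mulVec_eq_smul {ι : Type*} [Fintype ι] {A : Matrix ι ι ℝ}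
    (hA : ∀ i j, 0 ≤ A i j) {w : ι → ℝ} (hw : ∀ i, 0 < w i) {B : ℝ}
    (hB : A *ᵥ w ≤ B • w) {x : ℝ} {f : ι → ℝ} (hf : f ≠ 0)
    (hx : A *ᵥ f = x • f) : |x| ≤ B := by
  obtain ⟨u, hu⟩ := Function.ne_iff.1 hf
  obtain ⟨v, -, hv⟩ := exists_max_image univ (fun i => |f i| / w i) ⟨u, mem_univ u⟩
  set r := |f v| / w v
  have hfr : ∀ i, |f i| ≤ r * w i := fun i =>
    (div_le_iff₀ (hw i)).1 (hv i (mem_univ i))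
  have hr : 0 < r := (div_pos (abs_pos.2 hu) (hw u)).trans_le (hv u (mem_univ u))
  have hrv : r * w v = |f v| := div_mul_cancel₀ _ (hw v).ne'
  have key : |x| * |f v| ≤ B * |f v| :=
    calc |x| * |f v| = |∑ i, A v i * f i| := by
          rw [← abs_mul, ← smul_eq_mul, ← Pi.smul_apply, ← hx]; rfl
      _ ≤ ∑ i, A v i * |f i| := by
          refine (abs_sum_le_sum_abs _ _).trans_eq (sum_congr rfl fun i _ => ?_)
          rw [abs_mul, abs_of_nonneg (hA v i)]
      _ ≤ ∑ i, A v i * (r * w i) := by gcongr with i; exact hA v i; exact hfr i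
      _ = r * (A *ᵥ w) v := by
          simp only [mulVec, dotProduct, mul_sum]; exact sum_congr rfl fun i _ => by ring
      _ ≤ r * (B * w v) := by gcongr; exact hB v
      _ = B * |f v| := by rw [← hrv]; ring
  have hfv : 0 < |f v| := hrv ▸ mul_pos hr (hw v)
  exact le_of_mul_le_mul_right key hfv

theorem specRad_le_of_adjMatrix_mulVec_le {V : Type*} [Fintype V] [Nonempty V]
    (G : SimpleGraph V) [DecidableRel G.Adj] {w : V → ℝ} (hw : ∀ v, 0 < w v) {B : ℝ}
    (hB : G.adjMatrix ℝ *ᵥ w ≤ B • w) : specRad G ≤ B := by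
  have hA : ∀ i j, 0 ≤ G.adjMatrix ℝ i j := fun i j => by
    rw [adjMatrix_apply]; split_ifs <;> norm_num
  obtain ⟨v⟩ := ‹Nonempty V›
  have hB0 : 0 ≤ B := by
    have h0 : 0 ≤ (G.adjMatrix ℝ *ᵥ w) v :=
      sum_nonneg fun u _ => mul_nonneg (hA v u) (hw u).le
    exact nonneg_of_mul_nonneg_left (h0.trans (hB v)) (hw v)
  refine Real.sSup_le ?_ hB0
  rintro x ⟨f, hf, hx⟩
  refine (le_abs_self x).trans (Matrix.abs_le_of_mulVec_eq_smul hA hw hB hf ?_)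
  convert hx

theorem cocktail_adj {d : ℕ} {i j : Fin d} :
    (cocktail d).Adj i j ↔ (i : ℕ) / 2 ≠ (j : ℕ) / 2 := by
  rw [cocktail, fromRel_adj]
  exact ⟨fun h => h.2.elim id Ne.symm, fun h =>
    ⟨ne_of_apply_ne (fun k : Fin d => (k : ℕ) / 2) h, Or.inl h⟩⟩

theorem cocktail_adjMatrix_mulVec_apply {d : ℕ} [DecidableRel (cocktail d).Adj] (hd : Even d)
    (g : Fin d → ℝ) (i : Fin d) :
    ((cocktail d).adjMatrix ℝ *ᵥ g) i =
      ∑ j, g j - (g ⟨2 * (i / 2), by omega⟩ + g ⟨2 * (i / 2) + 1, by grind⟩) := by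
  set p : Fin d := ⟨2 * (i / 2), _⟩
  set q : Fin d := ⟨2 * (i / 2) + 1, _⟩
  have hN : (cocktail d).neighborFinset i = {p, q}ᶜ := by
    ext j
    simp only [mem_neighborFinset, cocktail_adj, mem_compl, mem_insert, mem_singleton, p, q,
      Fin.ext_iff]
    omega
  rw [adjMatrix_mulVec_apply, hN, ← sum_compl_add_sum {p, q}, sum_pair (by simp [p, q])]
  ring

/-- Weights constant on the classes of the equitable partition: `a` on vertex `1` (the paper's
`u'`), `b` on vertex `0` (the paper's `u`, joined to the other copy), `c` elsewhere. -/
def cpWeight (d : ℕ) (a b c : ℝ) (i : Fin d) : ℝ :=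
  if (i : ℕ) = 0 then b else if (i : ℕ) = 1 then a else c

theorem cpWeight_pos {d : ℕ} {a b c : ℝ} (ha : 0 < a) (hb : 0 < b) (hc : 0 < c) (i : Fin d) :
    0 < cpWeight d a b c i := by
  unfold cpWeight; split_ifs <;> assumption

theorem sum_cpWeight {d : ℕ} (hd : 2 ≤ d) (a b c : ℝ) :
    ∑ i, cpWeight d a b c i = a + b + (d - 2) * c := by
  obtain ⟨k, rfl⟩ : ∃ k, d = k + 2 := ⟨d - 2, by omega⟩
  simp [Fin.sum_univ_succ, cpWeight]
  ring

theorem cocktail_adjMatrix_mulVec_cpWeight {d : ℕ} [DecidableRel (cocktail d).Adj]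
    (hd : Even d) (a b c : ℝ) :
    (cocktail d).adjMatrix ℝ *ᵥ cpWeight d a b c =
      cpWeight d ((d - 2) * c) ((d - 2) * c) (a + b + (d - 4) * c) := by
  ext i
  have hd2 : 2 ≤ d := by obtain ⟨k, rfl⟩ := hd; have := i.isLt; omega
  rw [cocktail_adjMatrix_mulVec_apply hd, sum_cpWeight hd2]
  rcases (by omega : (i : ℕ) = 0 ∨ (i : ℕ) = 1 ∨ 2 ≤ (i : ℕ)) with hi | hi | hi
  · simp [cpWeight, hi]; ring
  · simp [cpWeight, hi]; ring
  · have h0 : (i : ℕ) ≠ 0 := by omega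
    have h1 : (i : ℕ) ≠ 1 := by omega
    have h0' : 2 * ((i : ℕ) / 2) ≠ 0 := by omega
    have h1' : 2 * ((i : ℕ) / 2) ≠ 1 := by omega
    simp [cpWeight, h0, h1, h0', h1']; ring

section twoCP

variable {m : ℕ} {i j : Fin m}

theorem twoCP_adj_inl_inl : (twoCP m).Adj (.inl i) (.inl j) ↔ (cocktail m).Adj i j := by
  rw [cocktail_adj, twoCP, fromRel_adj]
  exact ⟨fun h => h.2.elim id Ne.symm, fun h =>
    ⟨Sum.inl_injective.ne (ne_of_apply_ne (fun k : Fin m => (k : ℕ) / 2) h), Or.inl h⟩⟩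

theorem twoCP_adj_inr_inr : (twoCP m).Adj (.inr i) (.inr j) ↔ (cocktail m).Adj i j := by
  rw [cocktail_adj, twoCP, fromRel_adj]
  exact ⟨fun h => h.2.elim id Ne.symm, fun h =>
    ⟨Sum.inr_injective.ne (ne_of_apply_ne (fun k : Fin m => (k : ℕ) / 2) h), Or.inl h⟩⟩

theorem twoCP_adj_inl_inr :
    (twoCP m).Adj (.inl i) (.inr j) ↔ (i : ℕ) = 0 ∧ (j : ℕ) = 0 := by
  simp [twoCP, fromRel_adj]

theorem twoCP_adj_inr_inl :
    (twoCP m).Adj (.inr i) (.inl j) ↔ (i : ℕ) = 0 ∧ (j : ℕ) = 0 := by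
  simp [twoCP, fromRel_adj, and_comm]

theorem twoCP_adjMatrix_mulVec_cpWeight [DecidableRel (twoCP m).Adj] (hm : Even m) (a b c : ℝ) :
    (twoCP m).adjMatrix ℝ *ᵥ Sum.elim (cpWeight m a b c) (cpWeight m a b c) =
      Sum.elim (cpWeight m ((m - 2) * c) (b + (m - 2) * c) (a + b + (m - 4) * c))
        (cpWeight m ((m - 2) * c) (b + (m - 2) * c) (a + b + (m - 4) * c)) := by
  classical
  have hin : ∀ i, ∑ j, (if (cocktail m).Adj i j then cpWeight m a b c j else 0) =
      ((cocktail m).adjMatrix ℝ *ᵥ cpWeight m a b c) i := by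
    simp [mulVec, dotProduct, adjMatrix_apply]
  have hout : ∀ i : Fin m,
      ∑ j : Fin m, (if (i : ℕ) = 0 ∧ (j : ℕ) = 0 then cpWeight m a b c j else 0) =
        if (i : ℕ) = 0 then b else 0 := by
    intro i
    split_ifs with hi
    · rw [Fintype.sum_eq_single ⟨0, i.pos⟩ fun j hj => if_neg fun h => hj (Fin.ext h.2)]
      simp [cpWeight, hi]
    · exact sum_eq_zero fun j _ => if_neg fun h => hi h.1
  ext (i | i) <;>
  simp only [mulVec, dotProduct, Fintype.sum_sum_type, adjMatrix_apply, twoCP_adj_inl_inl,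
    twoCP_adj_inr_inr, twoCP_adj_inl_inr, twoCP_adj_inr_inl, Sum.elim_inl, Sum.elim_inr, ite_mul,
    one_mul, zero_mul]
  all_goals
    rw [hin, hout, cocktail_adjMatrix_mulVec_cpWeight hm]
    unfold cpWeight
    split_ifs <;> ring

theorem specRad_twoCP_le (hm : Even m) (hm0 : m ≠ 0) {a b c B : ℝ}
    (ha : 0 < a) (hb : 0 < b) (hc : 0 < c) (hu' : (m - 2) * c ≤ B * a)
    (hu : b + (m - 2) * c ≤ B * b) (hrest : a + b + (m - 4) * c ≤ B * c) :
    specRad (twoCP m) ≤ B := by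
  classical
  have : Nonempty (Fin m ⊕ Fin m) := ⟨.inl ⟨0, Nat.pos_of_ne_zero hm0⟩⟩
  refine specRad_le_of_adjMatrix_mulVec_le (twoCP m)
    (w := Sum.elim (cpWeight m a b c) (cpWeight m a b c))
    (by rintro (i | i) <;> exact cpWeight_pos ha hb hc i) ?_
  rw [twoCP_adjMatrix_mulVec_cpWeight hm]
  rintro (i | i) <;>
  · simp only [Sum.elim_inl, Sum.elim_inr, Pi.smul_apply, smul_eq_mul, cpWeight]
    split_ifs <;> assumption

theorem specRad_twoCP_le_sub_two_add (hm : Even m) (h4 : 4 ≤ m) {ε : ℝ}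
    (hε : 0 < ε) (h : 1 ≤ ε * (m - 2) + ε ^ 2) : specRad (twoCP m) ≤ m - 2 + ε := by
  have hM : (4 : ℝ) ≤ m := by exact_mod_cast h4
  set B : ℝ := m - 2 + ε
  have hB1 : 0 < B - 1 := by linarith
  have ha : (m - 2) / B ≤ 1 := (div_le_one (by linarith)).2 (by linarith)
  have hb : (m - 2) / (B - 1) ≤ 1 + ε := (div_le_iff₀ hB1).2 (by nlinarith)
  refine specRad_twoCP_le hm (by omega) (a := (m - 2) / B) (b := (m - 2) / (B - 1)) (c := 1)
    (div_pos (by linarith) (by linarith)) (div_pos (by linarith) hB1) one_pos ?_ ?_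
    (by linarith)
  · rw [mul_div_cancel₀ _ (by linarith)]; simp
  · have := mul_div_cancel₀ ((m : ℝ) - 2) hB1.ne'
    linarith

end twoCP

theorem stmt14 (n : ℕ) (hn : 8 ≤ n) (h4 : n % 4 = 0) :
    specRad (twoCP (n / 2)) < (n : ℝ) / 2 + 4 / (n : ℝ) - 2 := by
  obtain ⟨m, rfl⟩ : ∃ m, n = 2 * m := ⟨n / 2, by omega⟩
  have hm : (4 : ℝ) ≤ m := by exact_mod_cast (by omega : 4 ≤ m)
  rw [Nat.mul_div_cancel_left m two_pos]
  have hε : 1 ≤ 4 / (2 * m + 1) * ((m : ℝ) - 2) + (4 / (2 * m + 1)) ^ 2 := by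
    field_simp
    nlinarith
  calc specRad (twoCP m) ≤ m - 2 + 4 / (2 * m + 1) :=
        specRad_twoCP_le_sub_two_add (by grind) (by omega) (by positivity) hε
    _ < ((2 * m : ℕ) : ℝ) / 2 + 4 / ((2 * m : ℕ) : ℝ) - 2 := by
        push_cast
        have : (4 : ℝ) / (2 * m + 1) < 4 / (2 * m) := by gcongr; linarith
        linarith [show (2 * m : ℝ) / 2 = m by ring]
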